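/- arXiv:1503.07189 — 2 statements merged into one kernel-verified Lean document; each statement's English description precedes it below -/
import Mathlib

section
/- If x : S × A → ℝ≥0 satisfies the average-reward LP constraints — for all s, Σ_a x(s,a) = Σ_{s',a'} x(s',a')·P(s',a')(s), and Σ_{s,a} x(s,a) = 1 — then the marginal μ(s) = Σ_a x(s,a) is a stationary distribution of the Markov chain induced by the policy f(s,a) = x(s,a)/Σ_{a'} x(s,a') (defined on states s with μ(s) > 0): for all s, μ(s) = Σ_{s'} μ(s')·Σ_{a'} f(s',a')·P(s',a')(s). -/
open scoped Classical

theorem Finset.sum_mul_div_sum_of_nonneg {ι K : Type*} [Semifield K] [PartialOrder K]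
    [IsOrderedAddMonoid K] {s : Finset ι} {w : ι → K} (hw : ∀ j ∈ s, 0 ≤ w j) {i : ι}
    (hi : i ∈ s) : (∑ j ∈ s, w j) * (w i / ∑ j ∈ s, w j) = w i :=
  mul_div_cancel_of_imp' fun h => (Finset.sum_eq_zero_iff_of_nonneg hw).mp h i hi

theorem stmt5_general {S A : Type*} [Fintype S] (P : S → A → S → ℝ)
    (Act : S → Finset A)
    (x : S → A → ℝ) (hxnn : ∀ s a, 0 ≤ x s a)
    (hbal : ∀ s, ∑ a ∈ Act s, x s a
      = ∑ s', ∑ a' ∈ Act s', x s' a' * P s' a' s)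
    (μ : S → ℝ) (hμ : ∀ s, μ s = ∑ a ∈ Act s, x s a)
    (f : S → A → ℝ) (hf : ∀ s a, f s a = x s a / ∑ a' ∈ Act s, x s a') :
    ∀ s, μ s = ∑ s', μ s' * ∑ a' ∈ Act s', f s' a' * P s' a' s := by
  -- Holds also where `μ s = 0` (and `f s` is the junk `x s a / 0`): there `x s` vanishes.
  have hμf : ∀ s a, a ∈ Act s → μ s * f s a = x s a := fun s a ha => by
    rw [hμ, hf]
    exact Finset.sum_mul_div_sum_of_nonneg (fun a _ => hxnn s a) ha
  intro s
  rw [hμ, hbal]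
  refine Finset.sum_congr rfl fun s' _ => ?_
  rw [Finset.mul_sum]
  exact Finset.sum_congr rfl fun a' ha' => by rw [← mul_assoc, hμf s' a' ha']

/-- A feasible point of the average-reward LP yields a stationary distribution
`μ(s) = ∑_a x(s,a)` for the Markov chain induced by the policy
`f(s,a) = x(s,a) / ∑_{a'} x(s,a')`. -/
theorem stmt5 {S A : Type*} [Fintype S] [Fintype A] (P : S → A → S → ℝ)
    (Act : S → Finset A)
    (hAct : ∀ s a, a ∈ Act s ↔ ∃ s', 0 < P s a s')
    (hPnn : ∀ s a s', 0 ≤ P s a s')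
    (hPsum : ∀ s, ∀ a ∈ Act s, ∑ s', P s a s' = 1)
    (x : S → A → ℝ) (hxnn : ∀ s a, 0 ≤ x s a)
    (hbal : ∀ s, ∑ a ∈ Act s, x s a
      = ∑ s', ∑ a' ∈ Act s', x s' a' * P s' a' s)
    (hmass : ∑ s, ∑ a ∈ Act s, x s a = 1)
    (μ : S → ℝ) (hμ : ∀ s, μ s = ∑ a ∈ Act s, x s a)
    (f : S → A → ℝ) (hf : ∀ s a, f s a = x s a / ∑ a' ∈ Act s, x s a') :
    ∀ s, μ s = ∑ s', μ s' * ∑ a' ∈ Act s', f s' a' * P s' a' s :=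
  stmt5_general P Act x hxnn hbal μ hμ f hf
end

section
/- Suppose x ≥ 0 satisfies the discounted-flow constraints Σ_a x(s,a) − γ·Σ_{s',a'} x(s',a')·P(s',a')(s) = u_0(s) for all s, with γ ∈ (0,1) and u_0 a probability distribution. Then the marginal d(s) = Σ_a x(s,a) equals the discounted occupancy measure of the induced policy f(s,a) = x(s,a)/d(s) on {s : d(s) > 0}: d satisfies d = u_0 + γ·(P^f)^T d, where P^f(s,s') = Σ_a f(s,a)·P(s,a)(s'), and hence d(s) = Σ_{n≥0} γ^n Pr^f_{u_0}[X_n = s]. -/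
/-!
Rescaling the policy `f = x / d` by `d` gives back `x` (where `d s = 0` every `x s a` vanishes
by nonnegativity), so the flow constraints say exactly `d = u0 + γ • d ᵥ* Pf`. The matrix `Pf` is
substochastic, hence `‖γ • Pf‖ < 1` in the `ℓ∞` operator norm, `1 - γ • Pf` is inverted by the
Neumann series `∑ γⁿ Pfⁿ`, and `d = u0 ᵥ* ∑ γⁿ Pfⁿ` is the discounted occupancy measure.
-/

open scoped Classical

open Matrix

theorem sum_mul_sum_div_sum_mul {ι K : Type*} [Field K] [LinearOrder K] [IsStrictOrderedRing K]
    (I : Finset ι) {x : ι → K} (hx : ∀ a ∈ I, 0 ≤ x a) (p : ι → K) :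
    (∑ b ∈ I, x b) * ∑ a ∈ I, x a / (∑ b ∈ I, x b) * p a = ∑ a ∈ I, x a * p a := by
  rcases eq_or_ne (∑ b ∈ I, x b) 0 with hzero | hne
  · have hx0 := (Finset.sum_eq_zero_iff_of_nonneg hx).mp hzero
    rw [hzero, zero_mul, Finset.sum_eq_zero fun a ha => by rw [hx0 a ha, zero_mul]]
  · rw [Finset.mul_sum]
    exact Finset.sum_congr rfl fun a _ => by field_simp

theorem sum_sum_div_sum_mul_le_one {ι κ K : Type*} [Fintype κ] [Field K] [LinearOrder K]
    [IsStrictOrderedRing K] (I : Finset ι) (x : ι → K) {p : ι → κ → K}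
    (hp : ∀ a ∈ I, ∑ k, p a k = 1) :
    ∑ k, ∑ a ∈ I, x a / (∑ b ∈ I, x b) * p a k ≤ 1 := by
  calc ∑ k, ∑ a ∈ I, x a / (∑ b ∈ I, x b) * p a k
      = ∑ a ∈ I, x a / (∑ b ∈ I, x b) * ∑ k, p a k := by
        rw [Finset.sum_comm]; simp only [Finset.mul_sum]
    _ = (∑ a ∈ I, x a) / ∑ b ∈ I, x b := by
        rw [Finset.sum_div]; exact Finset.sum_congr rfl fun a ha => by rw [hp a ha, mul_one]
    _ ≤ 1 := div_self_le_one _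

theorem eq_vecMul_pow_of_succ {S R : Type*} [Fintype S] [DecidableEq S] [Semiring R]
    {M : Matrix S S R} {q : ℕ → S → R} (hq : ∀ n, q (n + 1) = q n ᵥ* M) (n : ℕ) :
    q n = q 0 ᵥ* M ^ n := by
  induction n with
  | zero => rw [pow_zero, vecMul_one]
  | succ n ih => rw [hq, ih, vecMul_vecMul, pow_succ]

section Neumann

attribute [local instance] Matrix.linftyOpNormedAddCommGroup Matrix.linftyOpNormedRing
  Matrix.linftyOpNormedAlgebra

variable {S : Type*} [Fintype S] [DecidableEq S]

theorem Matrix.linfty_opNorm_le_one_of_rowSum_le_one {M : Matrix S S ℝ}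
    (hM : ∀ i j, 0 ≤ M i j) (hrow : ∀ i, ∑ j, M i j ≤ 1) : ‖M‖ ≤ 1 := by
  rw [linfty_opNorm_def, NNReal.coe_le_one, Finset.sup_le_iff]
  intro i _
  rw [← NNReal.coe_le_one, NNReal.coe_sum]
  simpa only [coe_nnnorm, Real.norm_eq_abs, abs_of_nonneg (hM i _)] using hrow i

theorem hasSum_vecMul_pow_of_eq_add_vecMul {M : Matrix S S ℝ}
    (hM : ∀ i j, 0 ≤ M i j) (hrow : ∀ i, ∑ j, M i j ≤ 1) {γ : ℝ} (hγ0 : 0 ≤ γ) (hγ1 : γ < 1)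
    {u d : S → ℝ} (hd : d = u + γ • d ᵥ* M) (s : S) :
    HasSum (fun n => γ ^ n * (u ᵥ* M ^ n) s) (d s) := by
  have hnorm : ‖γ • M‖ < 1 :=
    calc ‖γ • M‖ ≤ ‖γ‖ * ‖M‖ := norm_smul_le γ M
      _ ≤ γ * 1 := by
        rw [Real.norm_of_nonneg hγ0]
        exact mul_le_mul_of_nonneg_left (linfty_opNorm_le_one_of_rowSum_le_one hM hrow) hγ0
      _ < 1 := by linarith
  set G := ∑' n, (γ • M) ^ n
  have hG : HasSum (fun n => (γ • M) ^ n) G := (summable_geometric_of_norm_lt_one hnorm).hasSum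
  have hdG : d = u ᵥ* G := by
    have hu : d ᵥ* (1 - γ • M) = u := by
      rw [vecMul_sub, vecMul_one, vecMul_smul]; exact sub_eq_iff_eq_add.mpr hd
    rw [← hu, vecMul_vecMul, show (1 - γ • M) * G = 1 from mul_neg_geom_series _ hnorm,
      vecMul_one]
  have hentry : ∀ i, HasSum (fun n => γ ^ n * (u i * (M ^ n) i s)) (u i * G i s) := fun i => by
    simpa only [smul_pow, Matrix.smul_apply, smul_eq_mul, mul_left_comm] using
      ((Pi.hasSum.mp (Pi.hasSum.mp hG i)) s).mul_left (u i)
  rw [hdG]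
  simpa only [vecMul, dotProduct, Finset.mul_sum] using hasSum_sum fun i _ => hentry i

end Neumann

theorem stmt17_general {S A : Type*} [Fintype S] [Fintype A]
    (P : S → A → S → ℝ) (u0 : S → ℝ) (γ : ℝ) (hγ0 : 0 < γ) (hγ1 : γ < 1)
    (Act : S → Finset A)
    (hPnn : ∀ s a s', 0 ≤ P s a s')
    (hPsum : ∀ s, ∀ a ∈ Act s, ∑ s', P s a s' = 1)
    (x : S → A → ℝ) (hxnn : ∀ s a, 0 ≤ x s a)
    (hcon : ∀ s, ∑ a ∈ Act s, x s a
      - γ * ∑ s', ∑ a' ∈ Act s', x s' a' * P s' a' s = u0 s)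
    (d : S → ℝ) (hd : ∀ s, d s = ∑ a ∈ Act s, x s a)
    (f : S → A → ℝ) (hf : ∀ s a, f s a = x s a / d s)
    (Pf : S → S → ℝ) (hPf : ∀ s s', Pf s s' = ∑ a ∈ Act s, f s a * P s a s')
    -- `q n s` : probability of being at `s` at time `n` under `f` from `u0`
    (q : ℕ → S → ℝ) (hq0 : ∀ s, q 0 s = u0 s)
    (hqS : ∀ n s, q (n + 1) s = ∑ s', q n s' * Pf s' s) :
    (∀ s, d s = u0 s + γ * ∑ s', d s' * Pf s' s) ∧
    (∀ s, HasSum (fun n => γ ^ n * q n s) (d s)) := by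
  have hflow : ∀ s' s, d s' * Pf s' s = ∑ a ∈ Act s', x s' a * P s' a s := fun s' s => by
    simp only [hPf, hf, hd]
    exact sum_mul_sum_div_sum_mul _ (fun a _ => hxnn s' a) _
  have hbal : ∀ s, d s = u0 s + γ * ∑ s', d s' * Pf s' s := fun s => by
    simp only [hflow]; linarith [hcon s, hd s]
  have hPfnn : ∀ s s', 0 ≤ Pf s s' := fun s s' => by
    simp only [hPf, hf, hd]
    exact Finset.sum_nonneg fun a _ => mul_nonneg
      (div_nonneg (hxnn s a) (Finset.sum_nonneg fun b _ => hxnn s b)) (hPnn s a s')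
  have hPfrow : ∀ s, ∑ s', Pf s s' ≤ 1 := fun s => by
    simp only [hPf, hf, hd]
    exact sum_sum_div_sum_mul_le_one _ _ (hPsum s)
  refine ⟨hbal, fun s => ?_⟩
  have hqpow := eq_vecMul_pow_of_succ (M := Pf) fun n => funext (hqS n)
  rw [funext hq0] at hqpow
  simpa only [← hqpow] using
    hasSum_vecMul_pow_of_eq_add_vecMul hPfnn hPfrow hγ0.le hγ1 (funext hbal) s

/-- The marginal `d(s) = ∑_a x(s,a)` of a feasible point of the discounted LP
satisfies `d = u0 + γ (P^f)ᵀ d` for the induced policy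
`f(s,a) = x(s,a)/d(s)`, and hence equals the discounted occupancy measure
`d(s) = ∑_n γⁿ Pr^f_{u0}[Xₙ = s]`. -/
theorem stmt17 {S A : Type*} [Fintype S] [Fintype A]
    (P : S → A → S → ℝ) (u0 : S → ℝ) (γ : ℝ) (hγ0 : 0 < γ) (hγ1 : γ < 1)
    (hu0nn : ∀ s, 0 ≤ u0 s) (hu0sum : ∑ s, u0 s = 1)
    (Act : S → Finset A) (hAct : ∀ s a, a ∈ Act s ↔ ∃ s', 0 < P s a s')
    (hPnn : ∀ s a s', 0 ≤ P s a s')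
    (hPsum : ∀ s, ∀ a ∈ Act s, ∑ s', P s a s' = 1)
    (x : S → A → ℝ) (hxnn : ∀ s a, 0 ≤ x s a)
    (hsupp : ∀ s a, a ∉ Act s → x s a = 0)
    (hcon : ∀ s, ∑ a ∈ Act s, x s a
      - γ * ∑ s', ∑ a' ∈ Act s', x s' a' * P s' a' s = u0 s)
    (d : S → ℝ) (hd : ∀ s, d s = ∑ a ∈ Act s, x s a)
    (f : S → A → ℝ) (hf : ∀ s a, f s a = x s a / d s)
    (Pf : S → S → ℝ) (hPf : ∀ s s', Pf s s' = ∑ a ∈ Act s, f s a * P s a s')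
    -- `q n s` : probability of being at `s` at time `n` under `f` from `u0`
    (q : ℕ → S → ℝ) (hq0 : ∀ s, q 0 s = u0 s)
    (hqS : ∀ n s, q (n + 1) s = ∑ s', q n s' * Pf s' s) :
    (∀ s, d s = u0 s + γ * ∑ s', d s' * Pf s' s) ∧
    (∀ s, HasSum (fun n => γ ^ n * q n s) (d s)) :=
  stmt17_general P u0 γ hγ0 hγ1 Act hPnn hPsum x hxnn hcon d hd f hf Pf hPf q hq0 hqS
end
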